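/- Let u_1, …, u_m be an orthonormal basis of ℝ^m, fix k < m and nonnegative reals λ_{k+1}, …, λ_m, and for t > 0 define C(t) = t Σ_{j=1}^k u_j u_jᵀ + Σ_{j=k+1}^m λ_j u_j u_jᵀ. Then for every v ∈ ℝ^m, as t → ∞, vᵀ (C(t) + I_m)⁻¹ v converges to Σ_{j=k+1}^m (u_jᵀ v)² / (λ_j + 1); in particular, if λ_j = 0 for all j > k, the limit equals ‖P_k⊥ v‖² where P_k⊥ = I_m − Σ_{j=1}^k u_j u_jᵀ. Thus spotlight inversion is the limit case of the Bayesian approximation error likelihood in which the k dominant eigenvalues of the error covariance are sent to infinity. -/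

import Mathlib

/-!
In the basis `u`, `C(t) + I` is diagonal with eigenvalues `t + 1` (for `j < k`) and `λⱼ + 1`
(for `j ≥ k`), so `(C(t) + I)⁻¹` is diagonal with the reciprocal eigenvalues and
`vᵀ (C(t) + I)⁻¹ v = Σⱼ (uⱼᵀ v)² / eigenvalueⱼ`; the first `k` terms carry the factor
`(t + 1)⁻¹ → 0`. Likewise `P_k⊥ = Σ_{j ≥ k} uⱼ uⱼᵀ` is diagonal with eigenvalues `0` and `1`,
so `‖P_k⊥ v‖² = Σ_{j ≥ k} (uⱼᵀ v)²`.
-/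

open Matrix Finset Filter Topology

noncomputable def eNorm {ι : Type*} [Fintype ι] (v : ι → ℝ) : ℝ :=
  Real.sqrt (∑ i, v i ^ 2)

lemma eNorm_sq {ι : Type*} [Fintype ι] (v : ι → ℝ) : eNorm v ^ 2 = v ⬝ᵥ v := by
  rw [eNorm, Real.sq_sqrt (by positivity)]
  simp only [dotProduct, sq]

namespace Matrix

variable {ι n R : Type*} [Fintype ι] [CommRing R]

def spectralSum (u : ι → n → R) (c : ι → R) : Matrix n n R :=
  ∑ j, c j • vecMulVec (u j) (u j)

variable (u : ι → n → R)

lemma spectralSum_add (c d : ι → R) :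
    spectralSum u c + spectralSum u d = spectralSum u (c + d) := by
  simp only [spectralSum, Pi.add_apply, add_smul, sum_add_distrib]

lemma spectralSum_sub (c d : ι → R) :
    spectralSum u c - spectralSum u d = spectralSum u (c - d) := by
  simp only [spectralSum, Pi.sub_apply, sub_smul, sum_sub_distrib]

lemma smul_spectralSum (a : R) (c : ι → R) : a • spectralSum u c = spectralSum u (a • c) := by
  simp only [spectralSum, smul_sum, smul_smul, Pi.smul_apply, smul_eq_mul]

lemma sum_filter_smul_vecMulVec (p : ι → Prop) [DecidablePred p] (c : ι → R) :
    ∑ j ∈ univ.filter p, c j • vecMulVec (u j) (u j)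
      = spectralSum u (fun j => if p j then c j else 0) := by
  simp only [sum_filter, spectralSum, ite_smul, zero_smul]

lemma sum_filter_vecMulVec (p : ι → Prop) [DecidablePred p] :
    ∑ j ∈ univ.filter p, vecMulVec (u j) (u j)
      = spectralSum u (fun j => if p j then 1 else 0) := by
  simp only [← sum_filter_smul_vecMulVec, one_smul]

lemma spectralSum_transpose (c : ι → R) : (spectralSum u c)ᵀ = spectralSum u c := by
  simp only [spectralSum, transpose_sum, transpose_smul, transpose_vecMulVec]

variable [Fintype n]

lemma spectralSum_mulVec (c : ι → R) (v : n → R) :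
    spectralSum u c *ᵥ v = ∑ j, (c j * (u j ⬝ᵥ v)) • u j := by
  simp only [spectralSum, sum_mulVec, smul_mulVec, vecMulVec_mulVec, op_smul_eq_smul, smul_smul]

lemma dotProduct_spectralSum_mulVec (c : ι → R) (v : n → R) :
    v ⬝ᵥ spectralSum u c *ᵥ v = ∑ j, c j * (u j ⬝ᵥ v) ^ 2 := by
  simp only [dotProduct_comm v, spectralSum_mulVec, sum_dotProduct, smul_dotProduct, smul_eq_mul,
    sq, mul_assoc]

variable [DecidableEq ι] {u}

lemma spectralSum_mulVec_eigenvector (horth : ∀ a b, u a ⬝ᵥ u b = if a = b then 1 else 0)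
    (c : ι → R) (b : ι) : spectralSum u c *ᵥ u b = c b • u b := by
  simp [spectralSum_mulVec, horth]

lemma spectralSum_mul (horth : ∀ a b, u a ⬝ᵥ u b = if a = b then 1 else 0) (c d : ι → R) :
    spectralSum u c * spectralSum u d = spectralSum u (c * d) := by
  simp [spectralSum, sum_mul, mul_sum, smul_mul_smul_comm, vecMulVec_mul_vecMulVec, horth,
    apply_ite (vecMulVec _)]

lemma spectralSum_one [DecidableEq n] (horth : ∀ a b, u a ⬝ᵥ u b = if a = b then 1 else 0)
    (hspan : Submodule.span R (Set.range u) = ⊤) : spectralSum u 1 = 1 := by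
  apply Matrix.toLin'.injective
  refine LinearMap.ext_on hspan ?_
  rintro _ ⟨b, rfl⟩
  simp [spectralSum_mulVec_eigenvector horth]

lemma dotProduct_self_spectralSum_mulVec
    (horth : ∀ a b, u a ⬝ᵥ u b = if a = b then 1 else 0) (c : ι → R) (v : n → R) :
    (spectralSum u c *ᵥ v) ⬝ᵥ (spectralSum u c *ᵥ v) = ∑ j, c j ^ 2 * (u j ⬝ᵥ v) ^ 2 := by
  rw [dotProduct_mulVec, ← mulVec_transpose, spectralSum_transpose, mulVec_mulVec,
    spectralSum_mul horth, dotProduct_comm, dotProduct_spectralSum_mulVec]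
  simp only [Pi.mul_apply, sq]

lemma spectralSum_inv {𝕜 : Type*} [Field 𝕜] [DecidableEq n] {u : ι → n → 𝕜}
    (horth : ∀ a b, u a ⬝ᵥ u b = if a = b then 1 else 0)
    (hspan : Submodule.span 𝕜 (Set.range u) = ⊤) {c : ι → 𝕜} (hc : ∀ j, c j ≠ 0) :
    (spectralSum u c)⁻¹ = spectralSum u c⁻¹ := by
  refine inv_eq_right_inv ?_
  rw [spectralSum_mul horth, ← spectralSum_one horth hspan]
  exact congrArg _ (funext fun j => mul_inv_cancel₀ (hc j))

lemma tendsto_dotProduct_inv_spectralSum_mulVec [DecidableEq n] {u : ι → n → ℝ}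
    (horth : ∀ a b, u a ⬝ᵥ u b = if a = b then 1 else 0)
    (hspan : Submodule.span ℝ (Set.range u) = ⊤) (p : ι → Prop) [DecidablePred p]
    {a : ι → ℝ} (ha : ∀ j, p j → a j ≠ 0) {f : ℝ → ℝ} (hf : Tendsto f atTop atTop) (v : n → ℝ) :
    Tendsto (fun t => v ⬝ᵥ (spectralSum u fun j => if p j then a j else f t)⁻¹ *ᵥ v) atTop
      (𝓝 (∑ j ∈ univ.filter p, (u j ⬝ᵥ v) ^ 2 / a j)) := by
  have hquad : ∀ᶠ t in atTop, ∑ j, (if p j then a j else f t)⁻¹ * (u j ⬝ᵥ v) ^ 2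
      = v ⬝ᵥ (spectralSum u fun j => if p j then a j else f t)⁻¹ *ᵥ v := by
    filter_upwards [hf.eventually_gt_atTop 0] with t ht
    have hc : ∀ j, (if p j then a j else f t) ≠ 0 := fun j => by
      split_ifs with hj
      exacts [ha j hj, ht.ne']
    rw [spectralSum_inv horth hspan hc, dotProduct_spectralSum_mulVec]
    rfl
  rw [sum_filter]
  refine (tendsto_finsetSum _ fun j _ => ?_).congr' hquad
  by_cases hj : p j
  · simpa only [hj, if_true, div_eq_inv_mul] using tendsto_const_nhds
  · simpa [hj] using (tendsto_inv_atTop_zero.comp hf).mul_const ((u j ⬝ᵥ v) ^ 2)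

end Matrix

lemma eNorm_sq_spectralSum_mulVec {ι n : Type*} [Fintype ι] [DecidableEq ι] [Fintype n]
    {u : ι → n → ℝ} (horth : ∀ a b, u a ⬝ᵥ u b = if a = b then 1 else 0) (c : ι → ℝ)
    (v : n → ℝ) : eNorm (spectralSum u c *ᵥ v) ^ 2 = ∑ j, c j ^ 2 * (u j ⬝ᵥ v) ^ 2 := by
  rw [eNorm_sq, dotProduct_self_spectralSum_mulVec horth]

theorem spotlight_limit_of_bae_general (m k : ℕ)
    (u : Fin m → (Fin m → ℝ)) (lam : Fin m → ℝ)
    (horth : ∀ a b, u a ⬝ᵥ u b = if a = b then (1 : ℝ) else 0)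
    (hbasis : Submodule.span ℝ (Set.range u) = ⊤)
    (hnonneg : ∀ j : Fin m, k ≤ (j : ℕ) → 0 ≤ lam j) :
    ∀ v : Fin m → ℝ,
      Tendsto
        (fun t : ℝ =>
          v ⬝ᵥ (((t • ∑ j ∈ Finset.univ.filter (fun j : Fin m => (j : ℕ) < k),
                    vecMulVec (u j) (u j)
                + ∑ j ∈ Finset.univ.filter (fun j : Fin m => k ≤ (j : ℕ)),
                    lam j • vecMulVec (u j) (u j)) + 1)⁻¹ *ᵥ v))
        atTop
        (𝓝 (∑ j ∈ Finset.univ.filter (fun j : Fin m => k ≤ (j : ℕ)),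
              (u j ⬝ᵥ v) ^ 2 / (lam j + 1))) ∧
      ((∀ j : Fin m, k ≤ (j : ℕ) → lam j = 0) →
        (∑ j ∈ Finset.univ.filter (fun j : Fin m => k ≤ (j : ℕ)),
            (u j ⬝ᵥ v) ^ 2 / (lam j + 1))
          = eNorm ((1 - ∑ j ∈ Finset.univ.filter (fun j : Fin m => (j : ℕ) < k),
              vecMulVec (u j) (u j)) *ᵥ v) ^ 2) := by
  intro v
  have hC : ∀ t : ℝ, (t • ∑ j ∈ univ.filter (fun j : Fin m => (j : ℕ) < k), vecMulVec (u j) (u j)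
      + ∑ j ∈ univ.filter (fun j : Fin m => k ≤ (j : ℕ)), lam j • vecMulVec (u j) (u j)) + 1
      = spectralSum u fun j => if k ≤ (j : ℕ) then lam j + 1 else t + 1 := fun t => by
    rw [sum_filter_vecMulVec, sum_filter_smul_vecMulVec, ← spectralSum_one horth hbasis,
      smul_spectralSum, spectralSum_add, spectralSum_add]
    congr 1 with j
    by_cases hj : k ≤ (j : ℕ) <;> simp [hj, not_lt.2, lt_of_not_ge]
  refine ⟨?_, fun hzero => ?_⟩
  · simp only [hC]
    exact tendsto_dotProduct_inv_spectralSum_mulVec horth hbasis _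
      (fun j hj => by linarith [hnonneg j hj]) (tendsto_atTop_add_const_right _ 1 tendsto_id) v
  · rw [sum_filter_vecMulVec, ← spectralSum_one horth hbasis, spectralSum_sub,
      eNorm_sq_spectralSum_mulVec horth, sum_filter]
    refine sum_congr rfl fun j _ => ?_
    by_cases hj : k ≤ (j : ℕ) <;> simp [hj, hzero, not_lt.2, lt_of_not_ge]

/-- Spotlight inversion as a limit case of the Bayesian approximation error likelihood:
with `C(t) = t Σ_{j≤k} u_j u_jᵀ + Σ_{j>k} λ_j u_j u_jᵀ`, for every `v` the quadratic form
`vᵀ (C(t) + I)⁻¹ v` converges, as `t → ∞`, to `Σ_{j>k} (u_jᵀ v)² / (λ_j + 1)`; and if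
`λ_j = 0` for all `j > k` the limit equals `‖P_k⊥ v‖²`. -/
theorem spotlight_limit_of_bae (m k : ℕ) (hk : k < m)
    (u : Fin m → (Fin m → ℝ)) (lam : Fin m → ℝ)
    (horth : ∀ a b, u a ⬝ᵥ u b = if a = b then (1 : ℝ) else 0)
    (hbasis : Submodule.span ℝ (Set.range u) = ⊤)
    (hnonneg : ∀ j : Fin m, k ≤ (j : ℕ) → 0 ≤ lam j) :
    ∀ v : Fin m → ℝ,
      Tendsto
        (fun t : ℝ =>
          v ⬝ᵥ (((t • ∑ j ∈ Finset.univ.filter (fun j : Fin m => (j : ℕ) < k),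
                    vecMulVec (u j) (u j)
                + ∑ j ∈ Finset.univ.filter (fun j : Fin m => k ≤ (j : ℕ)),
                    lam j • vecMulVec (u j) (u j)) + 1)⁻¹ *ᵥ v))
        atTop
        (𝓝 (∑ j ∈ Finset.univ.filter (fun j : Fin m => k ≤ (j : ℕ)),
              (u j ⬝ᵥ v) ^ 2 / (lam j + 1))) ∧
      ((∀ j : Fin m, k ≤ (j : ℕ) → lam j = 0) →
        (∑ j ∈ Finset.univ.filter (fun j : Fin m => k ≤ (j : ℕ)),
            (u j ⬝ᵥ v) ^ 2 / (lam j + 1))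
          = eNorm ((1 - ∑ j ∈ Finset.univ.filter (fun j : Fin m => (j : ℕ) < k),
              vecMulVec (u j) (u j)) *ᵥ v) ^ 2) :=
  spotlight_limit_of_bae_general m k u lam horth hbasis hnonneg
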